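/- For any integer k and nonnegative integer n, \sum_{m=0}^{n} (-1)^{n-m} \binom{n}{m} B_m^{(k-1)} = \sum_{m=0}^{n} (-1)^{n-m} \binom{n+1}{m} B_m^{(k)}, where B_m^{(k)} are the poly-Bernoulli numbers. -/

import Mathlib

open PowerSeries Finset Nat

/-- The formal power series `e^{-t}`. -/
noncomputable def expNeg : PowerSeries ℂ := PowerSeries.rescale (-1) (PowerSeries.exp ℂ)

/-- The generating function `Li_k(1-e^{-t})/(1-e^{-t}) = ∑_{m≥0} (1-e^{-t})^m/(m+1)^k`,
given coefficientwise (the sum truncates since `(1-e^{-t})^m` has order `≥ m`). -/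
noncomputable def polyBernoulliGF (k : ℤ) : PowerSeries ℂ :=
  PowerSeries.mk fun n => ∑ m ∈ Finset.range (n + 1),
    (((m : ℂ) + 1) ^ k)⁻¹ * PowerSeries.coeff (R := ℂ) n ((1 - expNeg) ^ m)

/-- The poly-Bernoulli polynomial `B_n^{(k)}(x)`, defined by
`Li_k(1-e^{-t})/(1-e^{-t}) · e^{xt} = ∑ B_n^{(k)}(x) tⁿ/n!`. -/
noncomputable def polyBernoulli (k : ℤ) (n : ℕ) (x : ℂ) : ℂ :=
  (n ! : ℂ) * PowerSeries.coeff (R := ℂ) n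
    (polyBernoulliGF k * PowerSeries.mk fun j => x ^ j / (j ! : ℂ))

/-- Stirling numbers of the second kind, via `(e^t-1)^m = m! ∑_{l} S₂(l,m) t^l/l!`. -/
noncomputable def stirling2 (l m : ℕ) : ℂ :=
  (l ! : ℂ) / (m ! : ℂ) * PowerSeries.coeff (R := ℂ) l ((PowerSeries.exp ℂ - 1) ^ m)

/-!
Write `u = 1 - e^{-t}` and `F_k = Li_k(u)/u`. Since `t Li_k'(t) = Li_{k-1}(t)` and `u' = e^{-t}`,
differentiating `u F_k = Li_k(u)` gives `(u F_k)' = e^{-t} F_{k-1}`; on the partial sums of the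
series this is the termwise identity `(u^{m+1})' = (m+1) u^m e^{-t}`, and the partial sums agree
with `F_k` to any prescribed order because `u^m` has order `m`. Multiplying an exponential
generating function by `e^{-t}` takes its coefficients `a_m` to `∑ (-1)^{n-m} C(n,m) a_m`, so the
two sides of the identity are the `n`-th coefficient of `e^{-t} F_{k-1}` and the `(n+1)`-th
coefficient of `u F_k`, which the derivative identity relates.
-/

lemma coeff_expNeg (j : ℕ) : coeff j expNeg = (-1) ^ j / (j ! : ℂ) := by
  rw [expNeg, coeff_rescale, coeff_exp, eq_ratCast]
  push_cast
  ring

lemma derivative_expNeg : d⁄dX ℂ expNeg = -expNeg := by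
  ext n
  rw [coeff_derivative, map_neg, coeff_expNeg, coeff_expNeg, factorial_succ]
  have : (n ! : ℂ) ≠ 0 := Nat.cast_ne_zero.mpr n.factorial_ne_zero
  push_cast
  field_simp
  ring

lemma derivative_one_sub_expNeg : d⁄dX ℂ (1 - expNeg) = expNeg := by
  rw [map_sub, derivative_one, derivative_expNeg, zero_sub, neg_neg]

lemma X_dvd_one_sub_expNeg : X ∣ 1 - expNeg := by
  rw [X_dvd_iff, map_sub, map_one, ← coeff_zero_eq_constantCoeff_apply, coeff_expNeg]
  simp

lemma coeff_pow_one_sub_expNeg_of_lt {j m : ℕ} (h : j < m) :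
    coeff j ((1 - expNeg) ^ m) = 0 :=
  X_pow_dvd_iff.mp (pow_dvd_pow_of_dvd X_dvd_one_sub_expNeg m) j h

noncomputable def polyBernoulliGFPartial (k : ℤ) (N : ℕ) : ℂ⟦X⟧ :=
  ∑ m ∈ range N, C (((m : ℂ) + 1) ^ k)⁻¹ * (1 - expNeg) ^ m

lemma X_pow_dvd_polyBernoulliGF_sub_polyBernoulliGFPartial (k : ℤ) (N : ℕ) :
    X ^ N ∣ polyBernoulliGF k - polyBernoulliGFPartial k N := by
  refine X_pow_dvd_iff.mpr fun j hj => ?_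
  rw [map_sub, sub_eq_zero, polyBernoulliGF, polyBernoulliGFPartial, coeff_mk, map_sum,
    ← sum_subset (range_subset_range.mpr hj)]
  · exact sum_congr rfl fun m _ => (coeff_C_mul _ _ _).symm
  · intro m _ hm
    rw [coeff_C_mul, coeff_pow_one_sub_expNeg_of_lt (by simpa using hm), mul_zero]

lemma derivative_one_sub_expNeg_pow_succ (m : ℕ) :
    d⁄dX ℂ ((1 - expNeg) ^ (m + 1)) = ((m : ℂ⟦X⟧) + 1) * (1 - expNeg) ^ m * expNeg := by
  rw [derivative_pow, derivative_one_sub_expNeg, Nat.add_sub_cancel]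
  push_cast
  ring

lemma derivative_one_sub_expNeg_mul_polyBernoulliGFPartial (k : ℤ) (N : ℕ) :
    d⁄dX ℂ ((1 - expNeg) * polyBernoulliGFPartial k N) =
      expNeg * polyBernoulliGFPartial (k - 1) N := by
  simp only [polyBernoulliGFPartial, mul_sum, map_sum]
  refine sum_congr rfl fun m _ => ?_
  rw [mul_left_comm, ← pow_succ' (1 - expNeg) m, Derivation.leibniz, derivative_C, smul_zero,
    add_zero, smul_eq_mul, derivative_one_sub_expNeg_pow_succ,
    zpow_sub_one₀ (Nat.cast_add_one_ne_zero m), mul_inv, inv_inv, map_mul]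
  simp only [map_add, map_natCast, map_one]
  ring

theorem derivative_one_sub_expNeg_mul_polyBernoulliGF (k : ℤ) :
    d⁄dX ℂ ((1 - expNeg) * polyBernoulliGF k) = expNeg * polyBernoulliGF (k - 1) := by
  ext n
  obtain ⟨f, hf⟩ := X_pow_dvd_polyBernoulliGF_sub_polyBernoulliGFPartial k (n + 2)
  obtain ⟨g, hg⟩ := X_pow_dvd_polyBernoulliGF_sub_polyBernoulliGFPartial (k - 1) (n + 2)
  rw [sub_eq_iff_eq_add] at hf hg
  have hf' : coeff (n + 1) ((1 - expNeg) * (X ^ (n + 2) * f)) = 0 :=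
    X_pow_dvd_iff.mp (dvd_mul_of_dvd_right (dvd_mul_right _ _) _) _ (by omega)
  have hg' : coeff n (expNeg * (X ^ (n + 2) * g)) = 0 :=
    X_pow_dvd_iff.mp (dvd_mul_of_dvd_right (dvd_mul_right _ _) _) _ (by omega)
  rw [hf, hg, mul_add, mul_add, map_add (d⁄dX ℂ), map_add, map_add, coeff_derivative, hf',
    hg', zero_mul, zero_add, zero_add, derivative_one_sub_expNeg_mul_polyBernoulliGFPartial]

lemma sum_alternating_choose_mul_coeff (f : ℂ⟦X⟧) (n : ℕ) :
    ∑ m ∈ range (n + 1), (-1 : ℂ) ^ (n - m) * (n.choose m : ℂ) * ((m ! : ℂ) * coeff m f) =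
      (n ! : ℂ) * coeff n (expNeg * f) := by
  rw [coeff_mul, Nat.sum_antidiagonal_eq_sum_range_succ_mk, mul_sum, ← sum_range_reflect]
  refine sum_congr rfl fun j hj => ?_
  have hjn : j ≤ n := Nat.lt_succ_iff.mp (mem_range.mp hj)
  have hfac : (n.choose j : ℂ) * (j ! : ℂ) * ((n - j)! : ℂ) = (n ! : ℂ) := by
    exact_mod_cast Nat.choose_mul_factorial_mul_factorial hjn
  have hj : (j ! : ℂ) ≠ 0 := Nat.cast_ne_zero.mpr j.factorial_ne_zero
  rw [show n + 1 - 1 - j = n - j by omega, Nat.sub_sub_self hjn, coeff_expNeg,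
    Nat.choose_symm hjn]
  field_simp
  linear_combination coeff (n - j) f * hfac

lemma sum_alternating_choose_succ_mul_coeff (f : ℂ⟦X⟧) (n : ℕ) :
    ∑ m ∈ range (n + 1),
        (-1 : ℂ) ^ (n - m) * ((n + 1).choose m : ℂ) * ((m ! : ℂ) * coeff m f) =
      ((n + 1)! : ℂ) * coeff (n + 1) ((1 - expNeg) * f) := by
  have h := sum_alternating_choose_mul_coeff f (n + 1)
  rw [sum_range_succ, Nat.sub_self, pow_zero, Nat.choose_self, Nat.cast_one, one_mul,
    one_mul] at h
  have hsign : ∑ m ∈ range (n + 1),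
      (-1 : ℂ) ^ (n + 1 - m) * ((n + 1).choose m : ℂ) * ((m ! : ℂ) * coeff m f) =
      -∑ m ∈ range (n + 1),
        (-1 : ℂ) ^ (n - m) * ((n + 1).choose m : ℂ) * ((m ! : ℂ) * coeff m f) := by
    rw [← sum_neg_distrib]
    refine sum_congr rfl fun m hm => ?_
    rw [show n + 1 - m = n - m + 1 by have := mem_range.mp hm; omega, pow_succ]
    ring
  rw [sub_mul, one_mul, map_sub, mul_sub, ← h, hsign]
  ring

lemma polyBernoulli_zero (k : ℤ) (m : ℕ) :
    polyBernoulli k m 0 = (m ! : ℂ) * coeff m (polyBernoulliGF k) := by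
  have hexp : (mk fun j => (0 : ℂ) ^ j / (j ! : ℂ)) = 1 := by
    ext (_ | j) <;> simp [coeff_one]
  rw [polyBernoulli, hexp, mul_one]

theorem polyBernoulli_number_identity (k : ℤ) (n : ℕ) :
    ∑ m ∈ Finset.range (n + 1),
        (-1 : ℂ) ^ (n - m) * (n.choose m : ℂ) * polyBernoulli (k - 1) m 0 =
      ∑ m ∈ Finset.range (n + 1),
        (-1 : ℂ) ^ (n - m) * ((n + 1).choose m : ℂ) * polyBernoulli k m 0 := by
  simp only [polyBernoulli_zero]
  rw [sum_alternating_choose_mul_coeff, sum_alternating_choose_succ_mul_coeff,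
    ← derivative_one_sub_expNeg_mul_polyBernoulliGF, coeff_derivative, factorial_succ]
  push_cast
  ring
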